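/- For each organization n, the utility difference from unilaterally deviating its synthetic data amount from d_n to d_n' equals z_n times the difference in the potential function F, i.e., U_n(d_n, d_{-n}) − U_n(d_n', d_{-n}) = z_n · (F(d_n, d_{-n}) − F(d_n', d_{-n})), so the game is a weighted potential game with weights 1/z_n. -/
import Mathlib

open Real Finset

/-- Theorem 1: the per-round game is a weighted potential game: the utility change
from a unilateral deviation equals `z n` times the change in the potential `F`. -/
theorem weighted_potential_game
    (N : ℕ) (hN : 0 < N)
    (α β δ ϱ ε0 ξ C0 : ℝ) (hα : 0 < α) (hβ : 0 < β) (hδ : 0 ≤ δ) (hϱ : 0 < ϱ)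
    (dloc ψ φ κ C η μ f : Fin N → ℝ) (γ : Fin N → Fin N → ℝ)
    (hdloc : ∀ n, 0 < dloc n)
    (eps : (Fin N → ℝ) → ℝ)
    (heps : ∀ d, eps d =
      Real.exp (((1 / (N : ℝ)) * ∑ m, (α * (dloc m + d m) ^ (-β) - δ) - 1) / ϱ))
    (z : Fin N → ℝ)
    (hz : ∀ n, z n = ∑ n', γ n n' * (ξ - φ n') - ψ n)
    (hzneg : ∀ n, z n < 0)
    (U : Fin N → (Fin N → ℝ) → ℝ)
    (hU : ∀ n d, U n d =
      ψ n * (ε0 - eps d)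
      + (∑ n', γ n n' * (ξ - φ n') * (eps d - eps (Function.update d n 0)))
      - κ n * C n * ((η n + μ n) * d n + η n * dloc n) * (f n) ^ 2 - C0)
    (F : (Fin N → ℝ) → ℝ)
    (hF : ∀ d, F d = eps d - ∑ m, κ m * C m * (η m + μ m) * d m * (f m) ^ 2 / z m) :
    ∀ (n : Fin N) (d : Fin N → ℝ) (x' : ℝ),
      U n d - U n (Function.update d n x') =
        z n * (F d - F (Function.update d n x')) := by
  intro n d x'
  have hzne : z n ≠ 0 := ne_of_lt (hzneg n)
  have hupd : Function.update (Function.update d n x') n 0 = Function.update d n 0 :=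
    by simp
  rw [hU n d, hU n (Function.update d n x'), hF d, hF (Function.update d n x'), hupd]
  have hsum : ∑ m, κ m * C m * (η m + μ m) * d m * f m ^ 2 / z m
      - ∑ m, κ m * C m * (η m + μ m) * (Function.update d n x') m * f m ^ 2 / z m
      = κ n * C n * (η n + μ n) * (d n - x') * f n ^ 2 / z n := by
    rw [← Finset.sum_sub_distrib, Finset.sum_eq_single n]
    · rw [Function.update_self]; ring
    · intro b _ hb; rw [Function.update_of_ne hb]; ring
    · simp
  have hfac : ∀ E : ℝ, ∑ n', γ n n' * (ξ - φ n') * E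
      = (∑ n', γ n n' * (ξ - φ n')) * E := fun E => by rw [Finset.sum_mul]
  rw [hfac, hfac, Function.update_self]
  have hzn := hz n
  set S := ∑ n', γ n n' * (ξ - φ n') with hS
  set E := eps d
  set E' := eps (Function.update d n x')
  set E0 := eps (Function.update d n 0)
  set A := ∑ m, κ m * C m * (η m + μ m) * d m * f m ^ 2 / z m
  set B := ∑ m, κ m * C m * (η m + μ m) * (Function.update d n x') m * f m ^ 2 / z m
  have : z n * (E - A - (E' - B)) = z n * (E - E') - z n * (A - B) := by ring
  rw [this, hsum]
  have hc : z n * (κ n * C n * (η n + μ n) * (d n - x') * f n ^ 2 / z n)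
      = κ n * C n * (η n + μ n) * (d n - x') * f n ^ 2 := by
    field_simp
  rw [hc, hzn]
  ring
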